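/- arXiv:math/0504168 — 5 statements merged into one kernel-verified Lean document; each statement's English description precedes it below -/
import Mathlib

section
/- Let L be a Lie algebra and r = Σᵢ (aᵢ⊗bᵢ − bᵢ⊗aᵢ) ∈ L⊗L. Set Δ = Δ_r, Δ(x) = x·r (adjoint diagonal action). Then for every x ∈ L, (1 + ξ + ξ²)∘(1⊗Δ)∘Δ(x) = x·c(r), where ξ cyclically permutes L⊗L⊗L and c(r) = [r¹²,r¹³] + [r¹²,r²³] + [r¹³,r²³]. -/
open TensorProduct

/-- The cyclic permutation `ξ : L⊗L⊗L → L⊗L⊗L`, `x₁⊗x₂⊗x₃ ↦ x₂⊗x₃⊗x₁`. -/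
noncomputable def cyclicPerm (F L : Type*) [Field F] [AddCommGroup L] [Module F L] :
    L ⊗[F] (L ⊗[F] L) →ₗ[F] L ⊗[F] (L ⊗[F] L) :=
  (TensorProduct.assoc F L L L).toLinearMap ∘ₗ
    (TensorProduct.comm F L (L ⊗[F] L)).toLinearMap

/-- The coboundary map `Δ_r : L → L ⊗ L`, `x ↦ x · r` (adjoint diagonal action),
as a linear map. -/
noncomputable def coboundaryDelta (F : Type*) {L : Type*} [Field F]
    [LieRing L] [LieAlgebra F L] (r : L ⊗[F] L) : L →ₗ[F] L ⊗[F] L :=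
  (LieModule.toEnd F L (L ⊗[F] L)).flip r

/-- `c(r) = [r¹²,r¹³] + [r¹²,r²³] + [r¹³,r²³]` for `r = Σᵢ pᵢ ⊗ qᵢ`. -/
noncomputable def cYB {F L : Type*} [Field F] [LieRing L] [LieAlgebra F L]
    {ι : Type*} [Fintype ι] (p q : ι → L) : L ⊗[F] (L ⊗[F] L) :=
  ∑ i, ∑ j, (⁅p i, p j⁆ ⊗ₜ[F] (q i ⊗ₜ[F] q j)
    + p i ⊗ₜ[F] (⁅q i, p j⁆ ⊗ₜ[F] q j)
    + p i ⊗ₜ[F] (p j ⊗ₜ[F] ⁅q i, q j⁆))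

/-!
Write `C₁₂₁₃(s ⊗ t) = [s¹², t¹³]`, `C₁₂₂₃(s ⊗ t) = [s¹², t²³]`, `C₁₃₂₃(s ⊗ t) = [s¹³, t²³]`, so
that `c(r) = (C₁₂₁₃ + C₁₂₂₃ + C₁₃₂₃)(r ⊗ r)`. These maps are `L`-equivariant, so `x · c(r)` is the
sum of the six terms `C(x·r ⊗ r)` and `C(r ⊗ x·r)`. On the other side
`(1 ⊗ Δ_r)(t) = (C₁₂₂₃ + C₁₃₂₃)(t ⊗ r)`, so `(1 ⊗ Δ)Δ(x) = (C₁₂₂₃ + C₁₃₂₃)(x·r ⊗ r)`.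
For skew-symmetric `s`, `t` (such as `x·r` and `r`) the cyclic permutation acts by
`ξ C₁₂₂₃(s ⊗ t) = C₁₂₁₃(t ⊗ s)`, `ξ C₁₃₂₃(s ⊗ t) = C₁₂₂₃(t ⊗ s)`, `ξ C₁₂₁₃(s ⊗ t) = C₁₃₂₃(s ⊗ t)`,
so the `ξ`-orbits of `C₁₂₂₃(x·r ⊗ r)` and `C₁₃₂₃(x·r ⊗ r)` are exactly those six terms.
-/

namespace CoboundaryYangBaxter

variable {F L : Type*} [Field F] [LieRing L] [LieAlgebra F L]

variable (F L) in
noncomputable def bracket12_13 : (L ⊗[F] L) ⊗[F] (L ⊗[F] L) →ₗ[F] L ⊗[F] (L ⊗[F] L) :=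
  (LieModule.toModuleHom F L L : L ⊗[F] L →ₗ[F] L).rTensor (L ⊗[F] L) ∘ₗ
    (TensorProduct.tensorTensorTensorComm F L L L L).toLinearMap

variable (F L) in
noncomputable def bracket12_23 : (L ⊗[F] L) ⊗[F] (L ⊗[F] L) →ₗ[F] L ⊗[F] (L ⊗[F] L) :=
  ((LieModule.toModuleHom F L L : L ⊗[F] L →ₗ[F] L).rTensor L ∘ₗ
      (TensorProduct.assoc F L L L).symm.toLinearMap).lTensor L ∘ₗ
    (TensorProduct.assoc F L L (L ⊗[F] L)).toLinearMap

variable (F L) in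
noncomputable def bracket13_23 : (L ⊗[F] L) ⊗[F] (L ⊗[F] L) →ₗ[F] L ⊗[F] (L ⊗[F] L) :=
  (TensorProduct.assoc F L L L).toLinearMap ∘ₗ
    (LieModule.toModuleHom F L L : L ⊗[F] L →ₗ[F] L).lTensor (L ⊗[F] L) ∘ₗ
    (TensorProduct.tensorTensorTensorComm F L L L L).toLinearMap

variable (F L) in
noncomputable def yangBaxterMap : (L ⊗[F] L) ⊗[F] (L ⊗[F] L) →ₗ[F] L ⊗[F] (L ⊗[F] L) :=
  bracket12_13 F L + bracket12_23 F L + bracket13_23 F L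

@[simp]
theorem bracket12_13_tmul (a b c d : L) :
    bracket12_13 F L ((a ⊗ₜ b) ⊗ₜ (c ⊗ₜ d)) = ⁅a, c⁆ ⊗ₜ (b ⊗ₜ d) := by
  simp [bracket12_13]

@[simp]
theorem bracket12_23_tmul (a b c d : L) :
    bracket12_23 F L ((a ⊗ₜ b) ⊗ₜ (c ⊗ₜ d)) = a ⊗ₜ (⁅b, c⁆ ⊗ₜ d) := by
  simp [bracket12_23]

@[simp]
theorem bracket13_23_tmul (a b c d : L) :
    bracket13_23 F L ((a ⊗ₜ b) ⊗ₜ (c ⊗ₜ d)) = a ⊗ₜ (c ⊗ₜ ⁅b, d⁆) := by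
  simp [bracket13_23]

@[simp]
theorem cyclicPerm_tmul (a b c : L) :
    cyclicPerm F L (a ⊗ₜ (b ⊗ₜ c)) = b ⊗ₜ (c ⊗ₜ a) := rfl

theorem coboundaryDelta_apply (r : L ⊗[F] L) (x : L) : coboundaryDelta F r x = ⁅x, r⁆ := rfl

theorem cYB_eq_yangBaxterMap {ι : Type*} [Fintype ι] (p q : ι → L) :
    cYB (F := F) p q = yangBaxterMap F L ((∑ i, p i ⊗ₜ q i) ⊗ₜ (∑ i, p i ⊗ₜ q i)) := by
  rw [cYB, sum_tmul]
  simp only [yangBaxterMap, tmul_sum, map_sum, LinearMap.add_apply, bracket12_13_tmul,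
    bracket12_23_tmul, bracket13_23_tmul, Finset.sum_add_distrib]

theorem lie_yangBaxterMap (x : L) (w : (L ⊗[F] L) ⊗[F] (L ⊗[F] L)) :
    ⁅x, yangBaxterMap F L w⁆ = yangBaxterMap F L ⁅x, w⁆ := by
  suffices h : LieModule.toEnd F L _ x ∘ₗ yangBaxterMap F L =
      yangBaxterMap F L ∘ₗ LieModule.toEnd F L _ x from LinearMap.congr_fun h w
  refine ext_fourfold' fun a b c d => ?_
  simp only [yangBaxterMap, LinearMap.comp_apply, LinearMap.add_apply, bracket12_13_tmul,
    bracket12_23_tmul, bracket13_23_tmul, LieModule.toEnd_apply_apply,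
    TensorProduct.LieModule.lie_tmul_right, map_add, tmul_add, add_tmul]
  rw [leibniz_lie x a c, leibniz_lie x b c, leibniz_lie x b d]
  simp only [tmul_add, add_tmul]
  abel

theorem lTensor_coboundaryDelta (r t : L ⊗[F] L) :
    (coboundaryDelta F r).lTensor L t = bracket12_23 F L (t ⊗ₜ r) + bracket13_23 F L (t ⊗ₜ r) := by
  induction t using TensorProduct.induction_on with
  | zero => simp
  | add t t' ht ht' => simp only [map_add, add_tmul, ht, ht']; abel
  | tmul a b =>
    rw [LinearMap.lTensor_tmul, coboundaryDelta_apply]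
    induction r using TensorProduct.induction_on with
    | zero => simp
    | tmul c d => simp [TensorProduct.LieModule.lie_tmul_right, tmul_add]
    | add r r' hr hr' => simp only [lie_add, tmul_add, map_add, hr, hr']; abel

theorem comm_lie (x : L) (s : L ⊗[F] L) :
    TensorProduct.comm F L L ⁅x, s⁆ = ⁅x, TensorProduct.comm F L L s⁆ := by
  induction s using TensorProduct.induction_on with
  | zero => simp
  | tmul a b => simp [TensorProduct.LieModule.lie_tmul_right, add_comm]
  | add s s' hs hs' => simp only [lie_add, map_add, hs, hs']

theorem cyclicPerm_bracket12_23 (s t : L ⊗[F] L) :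
    cyclicPerm F L (bracket12_23 F L (s ⊗ₜ t)) =
      -bracket12_13 F L (t ⊗ₜ TensorProduct.comm F L L s) := by
  suffices h : cyclicPerm F L ∘ₗ bracket12_23 F L = -(bracket12_13 F L ∘ₗ
      (TensorProduct.comm F _ _).toLinearMap ∘ₗ (TensorProduct.comm F L L).toLinearMap.rTensor _) by
    simpa using LinearMap.congr_fun h (s ⊗ₜ t)
  refine ext_fourfold' fun a b c d => ?_
  simp only [LinearMap.comp_apply, bracket12_23_tmul, cyclicPerm_tmul, LinearMap.neg_apply,
    LinearEquiv.coe_coe, LinearMap.rTensor_tmul, comm_tmul, bracket12_13_tmul]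
  rw [← lie_skew c b, neg_tmul, neg_neg]

theorem cyclicPerm_bracket13_23 (s t : L ⊗[F] L) :
    cyclicPerm F L (bracket13_23 F L (s ⊗ₜ t)) =
      -bracket12_23 F L (t ⊗ₜ TensorProduct.comm F L L s) := by
  suffices h : cyclicPerm F L ∘ₗ bracket13_23 F L = -(bracket12_23 F L ∘ₗ
      (TensorProduct.comm F _ _).toLinearMap ∘ₗ (TensorProduct.comm F L L).toLinearMap.rTensor _) by
    simpa using LinearMap.congr_fun h (s ⊗ₜ t)
  refine ext_fourfold' fun a b c d => ?_
  simp only [LinearMap.comp_apply, bracket13_23_tmul, cyclicPerm_tmul, LinearMap.neg_apply,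
    LinearEquiv.coe_coe, LinearMap.rTensor_tmul, comm_tmul, bracket12_23_tmul]
  rw [← lie_skew d b, neg_tmul, tmul_neg, neg_neg]

theorem cyclicPerm_bracket12_13 (s t : L ⊗[F] L) :
    cyclicPerm F L (bracket12_13 F L (s ⊗ₜ t)) =
      bracket13_23 F L (TensorProduct.comm F L L s ⊗ₜ TensorProduct.comm F L L t) := by
  suffices h : cyclicPerm F L ∘ₗ bracket12_13 F L = bracket13_23 F L ∘ₗ
      TensorProduct.map (TensorProduct.comm F L L).toLinearMap (TensorProduct.comm F L L).toLinearMap by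
    simpa using LinearMap.congr_fun h (s ⊗ₜ t)
  exact ext_fourfold' fun a b c d => rfl

theorem cyclicSum_lTensor_of_skew {s t : L ⊗[F] L} (hs : TensorProduct.comm F L L s = -s)
    (ht : TensorProduct.comm F L L t = -t) :
    ((LinearMap.id : L ⊗[F] (L ⊗[F] L) →ₗ[F] L ⊗[F] (L ⊗[F] L)) + cyclicPerm F L
        + cyclicPerm F L ∘ₗ cyclicPerm F L) (bracket12_23 F L (s ⊗ₜ t) + bracket13_23 F L (s ⊗ₜ t)) =
      yangBaxterMap F L (s ⊗ₜ t + t ⊗ₜ s) := by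
  have h12_23 : ∀ u v : L ⊗[F] L, TensorProduct.comm F L L u = -u →
      cyclicPerm F L (bracket12_23 F L (u ⊗ₜ v)) = bracket12_13 F L (v ⊗ₜ u) := by
    intro u v hu
    rw [cyclicPerm_bracket12_23, hu, tmul_neg, map_neg, neg_neg]
  have h13_23 : cyclicPerm F L (bracket13_23 F L (s ⊗ₜ t)) = bracket12_23 F L (t ⊗ₜ s) := by
    rw [cyclicPerm_bracket13_23, hs, tmul_neg, map_neg, neg_neg]
  have h12_13 : cyclicPerm F L (bracket12_13 F L (t ⊗ₜ s)) = bracket13_23 F L (t ⊗ₜ s) := by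
    rw [cyclicPerm_bracket12_13, hs, ht, neg_tmul, tmul_neg, neg_neg]
  simp only [LinearMap.add_apply, LinearMap.id_apply, LinearMap.comp_apply, map_add,
    h12_23 s t hs, h12_23 t s ht, h13_23, h12_13, yangBaxterMap]
  abel

end CoboundaryYangBaxter

open CoboundaryYangBaxter in
theorem witt_bialg_stmt3_general {F L : Type*} [Field F]
    [LieRing L] [LieAlgebra F L] {ι : Type*} [Fintype ι] (a b : ι → L)
    (r : L ⊗[F] L) (hr : r = ∑ i, (a i ⊗ₜ[F] b i - b i ⊗ₜ[F] a i)) :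
    ∀ x : L,
      ((LinearMap.id : L ⊗[F] (L ⊗[F] L) →ₗ[F] L ⊗[F] (L ⊗[F] L)) + cyclicPerm F L
        + cyclicPerm F L ∘ₗ cyclicPerm F L)
        (LinearMap.lTensor L (coboundaryDelta F r) (coboundaryDelta F r x))
      = ⁅x, cYB (F := F) (Sum.elim a (fun i => - b i)) (Sum.elim b a)⁆ := by
  intro x
  have hr_sum : r = ∑ k, Sum.elim a (fun i => - b i) k ⊗ₜ[F] Sum.elim b a k := by
    simp [hr, Fintype.sum_sum_type, sub_eq_add_neg, neg_tmul, Finset.sum_add_distrib]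
  have hr_skew : TensorProduct.comm F L L r = -r := by
    simp [hr, map_sum]
  have hxr_skew : TensorProduct.comm F L L ⁅x, r⁆ = -⁅x, r⁆ := by
    rw [comm_lie, hr_skew, lie_neg]
  rw [cYB_eq_yangBaxterMap, ← hr_sum, lie_yangBaxterMap, TensorProduct.LieModule.lie_tmul_right,
    coboundaryDelta_apply, lTensor_coboundaryDelta, cyclicSum_lTensor_of_skew hxr_skew hr_skew]

/-- For `r = Σᵢ (aᵢ⊗bᵢ - bᵢ⊗aᵢ)` and `Δ = Δ_r`, we have
`(1 + ξ + ξ²) ∘ (1 ⊗ Δ) ∘ Δ (x) = x · c(r)` for every `x ∈ L`. -/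
theorem witt_bialg_stmt3 {F L : Type*} [Field F] [CharZero F]
    [LieRing L] [LieAlgebra F L] {ι : Type*} [Fintype ι] (a b : ι → L)
    (r : L ⊗[F] L) (hr : r = ∑ i, (a i ⊗ₜ[F] b i - b i ⊗ₜ[F] a i)) :
    ∀ x : L,
      ((LinearMap.id : L ⊗[F] (L ⊗[F] L) →ₗ[F] L ⊗[F] (L ⊗[F] L)) + cyclicPerm F L
        + cyclicPerm F L ∘ₗ cyclicPerm F L)
        (LinearMap.lTensor L (coboundaryDelta F r) (coboundaryDelta F r x))
      = ⁅x, cYB (F := F) (Sum.elim a (fun i => - b i)) (Sum.elim b a)⁆ :=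
  witt_bialg_stmt3_general a b r hr
end

section
/- Let L be a Lie algebra containing two linearly independent elements a and b with [a,b] = kb for some nonzero scalar k. Set r = a⊗b − b⊗a and Δ_r(x) = x·r (adjoint diagonal action). Then (L, [·,·], Δ_r) is a triangular coboundary Lie bialgebra; in particular c(r) = 0 and Δ_r satisfies the co-Jacobi identity and strong anti-commutativity. -/
open TensorProduct

/-!
The coboundary map `Δ_r x = x · r` is a 1-cocycle for every `r`, and it
takes values in `Im(1 − τ)` whenever `r` does, because `τ` commutes with the diagonal action.
For `r = a ⊗ b − b ⊗ a` with `⁅a, b⁆ = k b` everything else is explicit: `Δ_r a = k r` and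
`Δ_r b = 0`, so `(1 ⊗ Δ_r) Δ_r x` expands, via the Jacobi identity
`⁅⁅x, a⁆, b⁆ = ⁅⁅x, b⁆, a⁆ + k ⁅x, b⁆`, into terms that cancel under cyclic symmetrisation,
and the classical Yang–Baxter expression `c(r)` collapses the same way.
-/

section CoboundaryDelta

variable {F L : Type*} [Field F] [LieRing L] [LieAlgebra F L]

lemma coboundaryDelta_apply (r : L ⊗[F] L) (x : L) : coboundaryDelta F r x = ⁅x, r⁆ := rfl

lemma coboundaryDelta_lie (r : L ⊗[F] L) (x y : L) :
    coboundaryDelta F r ⁅x, y⁆ = ⁅x, coboundaryDelta F r y⁆ - ⁅y, coboundaryDelta F r x⁆ :=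
  lie_lie x y r

lemma lie_tensorComm (x : L) (t : L ⊗[F] L) :
    ⁅x, TensorProduct.comm F L L t⁆ = TensorProduct.comm F L L ⁅x, t⁆ := by
  induction t using TensorProduct.induction_on with
  | zero => simp
  | tmul u v =>
    simp only [comm_tmul, LieModule.lie_tmul_right, map_add]
    abel
  | add s t hs ht => simp only [map_add, lie_add, hs, ht]

lemma coboundaryDelta_mem_range_id_sub_comm {r : L ⊗[F] L}
    (hr : r ∈ LinearMap.range (LinearMap.id - (TensorProduct.comm F L L).toLinearMap)) (x : L) :
    coboundaryDelta F r x ∈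
      LinearMap.range (LinearMap.id - (TensorProduct.comm F L L).toLinearMap) := by
  obtain ⟨s, rfl⟩ := hr
  refine ⟨⁅x, s⁆, ?_⟩
  simp only [coboundaryDelta_apply, LinearMap.sub_apply, LinearMap.id_apply,
    LinearEquiv.coe_coe, lie_sub, lie_tensorComm]

lemma tmul_sub_tmul_mem_range_id_sub_comm (a b : L) :
    a ⊗ₜ[F] b - b ⊗ₜ[F] a ∈
      LinearMap.range (LinearMap.id - (TensorProduct.comm F L L).toLinearMap) :=
  ⟨a ⊗ₜ[F] b, rfl⟩

lemma coboundaryDelta_tmul_sub_tmul_apply (a b x : L) :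
    coboundaryDelta F (a ⊗ₜ[F] b - b ⊗ₜ[F] a) x
      = ⁅x, a⁆ ⊗ₜ[F] b + a ⊗ₜ[F] ⁅x, b⁆ - (⁅x, b⁆ ⊗ₜ[F] a + b ⊗ₜ[F] ⁅x, a⁆) := by
  rw [coboundaryDelta_apply, lie_sub, LieModule.lie_tmul_right, LieModule.lie_tmul_right]

end CoboundaryDelta

lemma cyclicPerm_tmul {F L : Type*} [Field F] [AddCommGroup L] [Module F L] (x y z : L) :
    cyclicPerm F L (x ⊗ₜ[F] (y ⊗ₜ[F] z)) = y ⊗ₜ[F] (z ⊗ₜ[F] x) := rfl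

section SolvablePair

variable {F L : Type*} [Field F] [LieRing L] [LieAlgebra F L] {a b : L} {k : F}

lemma cYB_tmul_sub_tmul_eq_zero (hab : ⁅a, b⁆ = k • b) :
    cYB (F := F) ![a, -b] ![b, a] = 0 := by
  have hba : ⁅b, a⁆ = -(k • b) := by rw [← lie_skew, hab]
  simp only [cYB, Fin.sum_univ_two, Matrix.cons_val_zero, Matrix.cons_val_one,
    lie_self, lie_neg, neg_lie, hab, hba, neg_neg, zero_tmul, tmul_zero,
    neg_zero, tmul_neg, neg_tmul, tmul_smul, ← smul_tmul']
  module

lemma coboundaryDelta_tmul_sub_tmul_apply_left (hab : ⁅a, b⁆ = k • b) :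
    coboundaryDelta F (a ⊗ₜ[F] b - b ⊗ₜ[F] a) a = k • (a ⊗ₜ[F] b - b ⊗ₜ[F] a) := by
  simp [coboundaryDelta_tmul_sub_tmul_apply, hab, smul_sub, tmul_smul, ← smul_tmul']

lemma coboundaryDelta_tmul_sub_tmul_apply_right (hab : ⁅a, b⁆ = k • b) :
    coboundaryDelta F (a ⊗ₜ[F] b - b ⊗ₜ[F] a) b = 0 := by
  have hba : ⁅b, a⁆ = -(k • b) := by rw [← lie_skew, hab]
  simp only [coboundaryDelta_tmul_sub_tmul_apply, hba, lie_self, tmul_zero, zero_tmul,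
    neg_tmul, tmul_neg, tmul_smul, ← smul_tmul']
  abel

lemma lie_lie_eq_of_lie_eq_smul (hab : ⁅a, b⁆ = k • b) (x : L) :
    ⁅⁅x, a⁆, b⁆ = ⁅⁅x, b⁆, a⁆ + k • ⁅x, b⁆ := by
  rw [lie_lie, hab, lie_smul, ← lie_skew a ⁅x, b⁆]
  abel

lemma coJacobi_coboundaryDelta_tmul_sub_tmul (hab : ⁅a, b⁆ = k • b) (x : L) :
    ((LinearMap.id : L ⊗[F] (L ⊗[F] L) →ₗ[F] L ⊗[F] (L ⊗[F] L)) + cyclicPerm F L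
        + cyclicPerm F L ∘ₗ cyclicPerm F L)
      (LinearMap.lTensor L (coboundaryDelta F (a ⊗ₜ[F] b - b ⊗ₜ[F] a))
        (coboundaryDelta F (a ⊗ₜ[F] b - b ⊗ₜ[F] a) x)) = 0 := by
  rw [coboundaryDelta_tmul_sub_tmul_apply a b x]
  simp only [map_add, map_sub, map_zero, LinearMap.lTensor_tmul,
    coboundaryDelta_tmul_sub_tmul_apply_left hab, coboundaryDelta_tmul_sub_tmul_apply_right hab,
    coboundaryDelta_tmul_sub_tmul_apply a b ⁅x, a⁆, coboundaryDelta_tmul_sub_tmul_apply a b ⁅x, b⁆,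
    lie_lie_eq_of_lie_eq_smul hab, tmul_zero, tmul_sub, tmul_add, add_tmul, tmul_smul, map_smul,
    LinearMap.add_apply, LinearMap.id_apply, LinearMap.comp_apply, cyclicPerm_tmul,
    ← smul_tmul']
  module

end SolvablePair

theorem witt_bialg_stmt4_general {F L : Type*} [Field F]
    [LieRing L] [LieAlgebra F L] (a b : L) (k : F)
    (hbr : ⁅a, b⁆ = k • b)
    (r : L ⊗[F] L) (hr : r = a ⊗ₜ[F] b - b ⊗ₜ[F] a) :
    cYB (F := F) ![a, -b] ![b, a] = 0 ∧
    (∀ x : L, coboundaryDelta F r x ∈ LinearMap.range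
      (LinearMap.id - (TensorProduct.comm F L L).toLinearMap)) ∧
    (∀ x : L,
      ((LinearMap.id : L ⊗[F] (L ⊗[F] L) →ₗ[F] L ⊗[F] (L ⊗[F] L)) + cyclicPerm F L
        + cyclicPerm F L ∘ₗ cyclicPerm F L)
        (LinearMap.lTensor L (coboundaryDelta F r) (coboundaryDelta F r x)) = 0) ∧
    (∀ x y : L, coboundaryDelta F r ⁅x, y⁆
      = ⁅x, coboundaryDelta F r y⁆ - ⁅y, coboundaryDelta F r x⁆) := by
  subst hr
  exact ⟨cYB_tmul_sub_tmul_eq_zero hbr,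
    coboundaryDelta_mem_range_id_sub_comm (tmul_sub_tmul_mem_range_id_sub_comm a b),
    coJacobi_coboundaryDelta_tmul_sub_tmul hbr, coboundaryDelta_lie _⟩

/-- If `a, b ∈ L` are linearly independent with `[a,b] = k b`, `k ≠ 0`,
and `r = a⊗b - b⊗a`, then `Δ_r` makes `L` a triangular coboundary Lie bialgebra:
`c(r) = 0`, strong anti-commutativity, co-Jacobi identity, and compatibility hold. -/
theorem witt_bialg_stmt4 {F L : Type*} [Field F] [CharZero F]
    [LieRing L] [LieAlgebra F L] (a b : L) (k : F) (hk : k ≠ 0)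
    (hab : LinearIndependent F ![a, b]) (hbr : ⁅a, b⁆ = k • b)
    (r : L ⊗[F] L) (hr : r = a ⊗ₜ[F] b - b ⊗ₜ[F] a) :
    cYB (F := F) ![a, -b] ![b, a] = 0 ∧
    (∀ x : L, coboundaryDelta F r x ∈ LinearMap.range
      (LinearMap.id - (TensorProduct.comm F L L).toLinearMap)) ∧
    (∀ x : L,
      ((LinearMap.id : L ⊗[F] (L ⊗[F] L) →ₗ[F] L ⊗[F] (L ⊗[F] L)) + cyclicPerm F L
        + cyclicPerm F L ∘ₗ cyclicPerm F L)
        (LinearMap.lTensor L (coboundaryDelta F r) (coboundaryDelta F r x)) = 0) ∧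
    (∀ x y : L, coboundaryDelta F r ⁅x, y⁆
      = ⁅x, coboundaryDelta F r y⁆ - ⁅y, coboundaryDelta F r x⁆) :=
  witt_bialg_stmt4_general a b k hbr r hr
end

section
/- Let L be a Lie algebra and r ∈ Im(1−τ) ⊆ L⊗L. Then Δ_r (defined by Δ_r(x)=x·r) endows L with a Lie bialgebra structure if and only if r satisfies the modified Yang–Baxter equation x·c(r) = 0 for all x ∈ L. -/
/-! Polarise `c`: with `C(t, s) = [t¹², s¹³] + [t¹², s²³] + [t¹³, s²³]` we have `c(r) = C(r, r)` and
`x · C(t, s) = C(x · t, s) + C(t, x · s)`. The co-Jacobi expression `(1 + ξ + ξ²)(1 ⊗ Δ_r)Δ_r(x)` is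
the value at `(x · r, r)` of the bilinear map `(t, s) ↦ (1 + ξ + ξ²)(1 ⊗ Δ_s) t`, and on the
`L`-stable subspace `Im(1 − τ)` this map equals `C(t, s) + C(s, t)`: by bilinearity it suffices to
compare them at `(p ⊗ q − q ⊗ p, c ⊗ d − d ⊗ c)`, where only the antisymmetry of the bracket enters.
So the co-Jacobi expression is `x · c(r)`. The other two axioms hold for every `r ∈ Im(1 − τ)`, as
`Im(1 − τ)` is `L`-stable and `x ↦ x · r` is a 1-cocycle. -/

open TensorProduct

namespace CoboundaryLieBialgebra

open LieModule

section TensorComm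

variable {R L M : Type*} [CommRing R] [LieRing L] [LieAlgebra R L]
  [AddCommGroup M] [Module R M] [LieRingModule L M] [LieModule R L M]

lemma comm_lie (x : L) (t : M ⊗[R] M) :
    TensorProduct.comm R M M ⁅x, t⁆ = ⁅x, TensorProduct.comm R M M t⁆ := by
  induction t using TensorProduct.induction_on with
  | zero => simp
  | tmul u v => simp [add_comm]
  | add t s ht hs => simp [ht, hs]

lemma lie_mem_range_id_sub_comm (x : L) {t : M ⊗[R] M}
    (ht : t ∈ LinearMap.range (LinearMap.id - (TensorProduct.comm R M M).toLinearMap)) :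
    ⁅x, t⁆ ∈ LinearMap.range (LinearMap.id - (TensorProduct.comm R M M).toLinearMap) := by
  obtain ⟨t, rfl⟩ := ht
  exact ⟨⁅x, t⁆, by simp [comm_lie]⟩

end TensorComm

variable {F L : Type*} [Field F] [LieRing L] [LieAlgebra F L]

lemma coboundaryDelta_apply (r : L ⊗[F] L) (x : L) : coboundaryDelta F r x = ⁅x, r⁆ := rfl

lemma coboundaryDelta_lie (r : L ⊗[F] L) (x y : L) :
    coboundaryDelta F r ⁅x, y⁆ = ⁅x, coboundaryDelta F r y⁆ - ⁅y, coboundaryDelta F r x⁆ := by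
  simp only [coboundaryDelta_apply, lie_lie]

noncomputable def bracket12_13 : (L ⊗[F] L) →ₗ[F] (L ⊗[F] L) →ₗ[F] L ⊗[F] (L ⊗[F] L) :=
  (TensorProduct.mk F (L ⊗[F] L) (L ⊗[F] L)).compr₂
    (TensorProduct.map (toModuleHom F L L).toLinearMap LinearMap.id ∘ₗ
      (TensorProduct.tensorTensorTensorComm F L L L L).toLinearMap)

noncomputable def bracket12_23 : (L ⊗[F] L) →ₗ[F] (L ⊗[F] L) →ₗ[F] L ⊗[F] (L ⊗[F] L) :=
  (TensorProduct.mk F (L ⊗[F] L) (L ⊗[F] L)).compr₂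
    (LinearMap.lTensor L (LinearMap.rTensor L (toModuleHom F L L).toLinearMap ∘ₗ
        (TensorProduct.assoc F L L L).symm.toLinearMap) ∘ₗ
      (TensorProduct.assoc F L L (L ⊗[F] L)).toLinearMap)

noncomputable def bracket13_23 : (L ⊗[F] L) →ₗ[F] (L ⊗[F] L) →ₗ[F] L ⊗[F] (L ⊗[F] L) :=
  (TensorProduct.mk F (L ⊗[F] L) (L ⊗[F] L)).compr₂
    ((TensorProduct.assoc F L L L).toLinearMap ∘ₗ
      LinearMap.lTensor (L ⊗[F] L) (toModuleHom F L L).toLinearMap ∘ₗ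
      (TensorProduct.tensorTensorTensorComm F L L L L).toLinearMap)

@[simp] lemma bracket12_13_tmul (p q c d : L) :
    bracket12_13 (p ⊗ₜ[F] q) (c ⊗ₜ[F] d) = ⁅p, c⁆ ⊗ₜ (q ⊗ₜ d) := by
  simp [bracket12_13]

@[simp] lemma bracket12_23_tmul (p q c d : L) :
    bracket12_23 (p ⊗ₜ[F] q) (c ⊗ₜ[F] d) = p ⊗ₜ (⁅q, c⁆ ⊗ₜ d) := by
  simp [bracket12_23]

@[simp] lemma bracket13_23_tmul (p q c d : L) :
    bracket13_23 (p ⊗ₜ[F] q) (c ⊗ₜ[F] d) = p ⊗ₜ (c ⊗ₜ ⁅q, d⁆) := by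
  simp [bracket13_23]

noncomputable def classicalYB : (L ⊗[F] L) →ₗ[F] (L ⊗[F] L) →ₗ[F] L ⊗[F] (L ⊗[F] L) :=
  bracket12_13 + bracket12_23 + bracket13_23

lemma cYB_eq_classicalYB {ι : Type*} [Fintype ι] (a b : ι → L) :
    cYB (F := F) a b = classicalYB (∑ i, a i ⊗ₜ[F] b i) (∑ i, a i ⊗ₜ[F] b i) := by
  simp only [cYB, classicalYB, map_sum, LinearMap.add_apply, LinearMap.sum_apply,
    bracket12_13_tmul, bracket12_23_tmul, bracket13_23_tmul]
  exact Finset.sum_comm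

lemma classicalYB_lie (x : L) (t s : L ⊗[F] L) :
    classicalYB ⁅x, t⁆ s + classicalYB t ⁅x, s⁆ = ⁅x, classicalYB t s⁆ := by
  suffices classicalYB ∘ₗ toEnd F L (L ⊗[F] L) x + classicalYB.compl₂ (toEnd F L (L ⊗[F] L) x)
      = classicalYB.compr₂ (toEnd F L (L ⊗[F] (L ⊗[F] L)) x) by
    simpa using LinearMap.congr_fun₂ this t s
  ext p q c d
  simp [classicalYB, sub_tmul, tmul_sub, tmul_add]
  abel

noncomputable def lTensorCoboundary : (L ⊗[F] L) →ₗ[F] (L ⊗[F] L) →ₗ[F] L ⊗[F] (L ⊗[F] L) :=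
  (LinearMap.lTensorHom L ∘ₗ
    (toEnd F L (L ⊗[F] L) : L →ₗ[F] Module.End F (L ⊗[F] L)).flip).flip

lemma lTensorCoboundary_apply (t s : L ⊗[F] L) :
    lTensorCoboundary t s = LinearMap.lTensor L (coboundaryDelta F s) t := rfl

lemma cyclicSum_lTensorCoboundary {t s : L ⊗[F] L}
    (ht : t ∈ LinearMap.range (LinearMap.id - (TensorProduct.comm F L L).toLinearMap))
    (hs : s ∈ LinearMap.range (LinearMap.id - (TensorProduct.comm F L L).toLinearMap)) :
    ((LinearMap.id : L ⊗[F] (L ⊗[F] L) →ₗ[F] L ⊗[F] (L ⊗[F] L)) + cyclicPerm F L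
      + cyclicPerm F L ∘ₗ cyclicPerm F L) (lTensorCoboundary t s)
      = classicalYB t s + classicalYB s t := by
  obtain ⟨t, rfl⟩ := ht
  obtain ⟨s, rfl⟩ := hs
  set A := LinearMap.id - (TensorProduct.comm F L L).toLinearMap
  suffices (lTensorCoboundary.compl₁₂ A A).compr₂
      ((LinearMap.id : L ⊗[F] (L ⊗[F] L) →ₗ[F] L ⊗[F] (L ⊗[F] L)) + cyclicPerm F L
        + cyclicPerm F L ∘ₗ cyclicPerm F L) = (classicalYB + classicalYB.flip).compl₁₂ A A by
    simpa using LinearMap.congr_fun₂ this t s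
  ext p q c d
  simp [A, lTensorCoboundary, classicalYB, cyclicPerm, tmul_add]
  simp only [← lie_skew c p, ← lie_skew d p, ← lie_skew c q, ← lie_skew d q, neg_tmul, tmul_neg]
  abel

lemma cyclicSum_coJacobi {r : L ⊗[F] L}
    (hr : r ∈ LinearMap.range (LinearMap.id - (TensorProduct.comm F L L).toLinearMap)) (x : L) :
    ((LinearMap.id : L ⊗[F] (L ⊗[F] L) →ₗ[F] L ⊗[F] (L ⊗[F] L)) + cyclicPerm F L
      + cyclicPerm F L ∘ₗ cyclicPerm F L)
      (LinearMap.lTensor L (coboundaryDelta F r) (coboundaryDelta F r x))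
      = ⁅x, classicalYB r r⁆ := by
  rw [coboundaryDelta_apply r x, ← lTensorCoboundary_apply, ← classicalYB_lie]
  exact cyclicSum_lTensorCoboundary (lie_mem_range_id_sub_comm x hr) hr

end CoboundaryLieBialgebra

theorem witt_bialg_stmt5_general {F L : Type*} [Field F]
    [LieRing L] [LieAlgebra F L] {ι : Type*} [Fintype ι] (a b : ι → L)
    (r : L ⊗[F] L) (hrsum : r = ∑ i, a i ⊗ₜ[F] b i)
    (hr : r ∈ LinearMap.range
      (LinearMap.id - (TensorProduct.comm F L L).toLinearMap)) :
    ((∀ x : L, coboundaryDelta F r x ∈ LinearMap.range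
        (LinearMap.id - (TensorProduct.comm F L L).toLinearMap)) ∧
     (∀ x : L,
       ((LinearMap.id : L ⊗[F] (L ⊗[F] L) →ₗ[F] L ⊗[F] (L ⊗[F] L)) + cyclicPerm F L
         + cyclicPerm F L ∘ₗ cyclicPerm F L)
         (LinearMap.lTensor L (coboundaryDelta F r) (coboundaryDelta F r x)) = 0) ∧
     (∀ x y : L, coboundaryDelta F r ⁅x, y⁆
       = ⁅x, coboundaryDelta F r y⁆ - ⁅y, coboundaryDelta F r x⁆))
    ↔ (∀ x : L, ⁅x, cYB (F := F) a b⁆ = 0) := by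
  simp only [CoboundaryLieBialgebra.cyclicSum_coJacobi hr,
    CoboundaryLieBialgebra.cYB_eq_classicalYB, ← hrsum]
  exact ⟨fun h => h.2.1, fun h => ⟨fun x => CoboundaryLieBialgebra.lie_mem_range_id_sub_comm x hr,
    h, CoboundaryLieBialgebra.coboundaryDelta_lie r⟩⟩

/-- Drinfeld: For `r ∈ Im(1-τ)`, the map `Δ_r(x) = x · r` endows the
Lie algebra `L` with a Lie bialgebra structure if and only if `x · c(r) = 0` for all
`x ∈ L` (the modified Yang–Baxter equation). -/
theorem witt_bialg_stmt5 {F L : Type*} [Field F] [CharZero F]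
    [LieRing L] [LieAlgebra F L] {ι : Type*} [Fintype ι] (a b : ι → L)
    (r : L ⊗[F] L) (hrsum : r = ∑ i, a i ⊗ₜ[F] b i)
    (hr : r ∈ LinearMap.range
      (LinearMap.id - (TensorProduct.comm F L L).toLinearMap)) :
    ((∀ x : L, coboundaryDelta F r x ∈ LinearMap.range
        (LinearMap.id - (TensorProduct.comm F L L).toLinearMap)) ∧
     (∀ x : L,
       ((LinearMap.id : L ⊗[F] (L ⊗[F] L) →ₗ[F] L ⊗[F] (L ⊗[F] L)) + cyclicPerm F L
         + cyclicPerm F L ∘ₗ cyclicPerm F L)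
         (LinearMap.lTensor L (coboundaryDelta F r) (coboundaryDelta F r x)) = 0) ∧
     (∀ x y : L, coboundaryDelta F r ⁅x, y⁆
       = ⁅x, coboundaryDelta F r y⁆ - ⁅y, coboundaryDelta F r x⁆))
    ↔ (∀ x : L, ⁅x, cYB (F := F) a b⁆ = 0) :=
  witt_bialg_stmt5_general a b r hrsum hr
end

section
/- Let L = ⊕_{x∈A} L_x be an A-graded Lie algebra and V = ⊕_{x∈A} V_x an A-graded L-module such that (a) H¹(L₀, V_x) = 0 for all x ≠ 0, (b) Hom_{L₀}(L_x, V_y) = 0 for x ≠ y, and (c) dim L₀ < ∞. Then Der(L,V) = Der(L,V)₀ + Inn(L,V). -/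
private def brkMap {F : Type*} [Field F] {L : Type*} [LieRing L] [LieAlgebra F L]
    {V : Type*} [AddCommGroup V] [Module F V] [LieRingModule L V] [LieModule F L V]
    (w : V) : L →ₗ[F] V where
  toFun u := ⁅u, w⁆
  map_add' a b := add_lie a b w
  map_smul' c a := smul_lie c a w

@[simp] private lemma brkMap_apply {F : Type*} [Field F] {L : Type*} [LieRing L] [LieAlgebra F L]
    {V : Type*} [AddCommGroup V] [Module F V] [LieRingModule L V] [LieModule F L V]
    (w : V) (u : L) : brkMap (F := F) w u = ⁅u, w⁆ := rfl


/-- Farnsteiner: Let `L = ⊕_{x∈A} L_x` be an `A`-graded Lie algebra and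
`V = ⊕_{x∈A} V_x` an `A`-graded `L`-module such that
(a) `H¹(L₀, V_x) = 0` for `x ≠ 0` (every derivation `L₀ → V_x` is inner),
(b) `Hom_{L₀}(L_x, V_y) = 0` for `x ≠ y`, and
(c) `dim L₀ < ∞`.
Then `Der(L,V) = Der(L,V)₀ + Inn(L,V)`. -/
theorem witt_bialg_stmt9 {F : Type*} [Field F] [CharZero F] {A : Type*}
    [AddCommGroup A] [DecidableEq A] {L : Type*} [LieRing L] [LieAlgebra F L]
    {V : Type*} [AddCommGroup V] [Module F V] [LieRingModule L V] [LieModule F L V]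
    (Lx : A → Submodule F L) (Vx : A → Submodule F V)
    (hL : DirectSum.IsInternal Lx) (hV : DirectSum.IsInternal Vx)
    (hLgr : ∀ x y : A, ∀ u ∈ Lx x, ∀ v ∈ Lx y, ⁅u, v⁆ ∈ Lx (x + y))
    (hVgr : ∀ x y : A, ∀ u ∈ Lx x, ∀ v ∈ Vx y, ⁅u, v⁆ ∈ Vx (x + y))
    -- (a): every derivation from `L₀` to `V_x` (`x ≠ 0`) is inner
    (ha : ∀ x : A, x ≠ 0 → ∀ D : L →ₗ[F] V,
      (∀ u ∈ Lx 0, D u ∈ Vx x) →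
      (∀ u w : L, u ∈ Lx 0 → w ∈ Lx 0 → D ⁅u, w⁆ = ⁅u, D w⁆ - ⁅w, D u⁆) →
      ∃ v ∈ Vx x, ∀ u ∈ Lx 0, D u = ⁅u, v⁆)
    -- (b): `Hom_{L₀}(L_x, V_y) = 0` for `x ≠ y`
    (hb : ∀ x y : A, x ≠ y → ∀ f : L →ₗ[F] V,
      (∀ u ∈ Lx x, f u ∈ Vx y) →
      (∀ p ∈ Lx 0, ∀ u ∈ Lx x, f ⁅p, u⁆ = ⁅p, f u⁆) →
      ∀ u ∈ Lx x, f u = 0)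
    -- (c): `L₀` is finite dimensional
    (hc : FiniteDimensional F (Lx 0))
    (d : L →ₗ[F] V) (hd : ∀ u w : L, d ⁅u, w⁆ = ⁅u, d w⁆ - ⁅w, d u⁆) :
    ∃ (d₀ : L →ₗ[F] V) (v : V),
      (∀ y : A, ∀ u ∈ Lx y, d₀ u ∈ Vx y) ∧
      (∀ u w : L, d₀ ⁅u, w⁆ = ⁅u, d₀ w⁆ - ⁅w, d₀ u⁆) ∧
      (∀ u : L, d u = d₀ u + ⁅u, v⁆) := by
  classical
  letI : DirectSum.Decomposition Vx := hV.chooseDecomposition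
  -- projections onto the graded pieces of V, as linear endomorphisms of V
  set P : A → V →ₗ[F] V := fun z =>
    (Vx z).subtype ∘ₗ (DirectSum.component F A (fun i => Vx i) z) ∘ₗ
      (DirectSum.decomposeLinearEquiv Vx).toLinearMap with hPdef
  have hPapply : ∀ (z : A) (m : V), P z m = (DirectSum.decompose Vx m z : V) := fun z m => rfl
  have hPmem : ∀ (z : A) (m : V), P z m ∈ Vx z := fun z m => (DirectSum.decompose Vx m z).2
  have hPsame : ∀ (z : A) (m : V), m ∈ Vx z → P z m = m := fun z m hm => by
    rw [hPapply]; exact DirectSum.decompose_of_mem_same Vx hm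
  have hPne : ∀ (z w : A) (m : V), m ∈ Vx w → w ≠ z → P z m = 0 := fun z w m hm hwz => by
    rw [hPapply]; exact DirectSum.decompose_of_mem_ne Vx hm hwz
  -- membership criterion via projections
  have hmem : ∀ (y : A) (m : V), (∀ z, z ≠ y → P z m = 0) → m ∈ Vx y := by
    intro y m h
    have hs := DirectSum.sum_support_decompose Vx m
    have h2 : ∑ z ∈ (DirectSum.decompose Vx m).support, (DirectSum.decompose Vx m z : V)
        = (DirectSum.decompose Vx m y : V) := by
      apply Finset.sum_eq_single
      · intro z _ hz
        have := h z hz; rwa [hPapply] at this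
      · intro hy
        rw [DFinsupp.notMem_support_iff.mp hy]; rfl
    rw [← hs, h2]
    exact (DirectSum.decompose Vx m y).2
  -- equivariance of projections w.r.t. homogeneous elements of L
  have hequiv : ∀ (y : A) (u : L), u ∈ Lx y → ∀ (z : A) (m : V),
      P (y + z) ⁅u, m⁆ = ⁅u, P z m⁆ := by
    intro y u hu z m
    have hm : m ∈ ⨆ i, Vx i := hV.submodule_iSup_eq_top ▸ Submodule.mem_top
    refine Submodule.iSup_induction (motive := fun m => P (y + z) ⁅u, m⁆ = ⁅u, P z m⁆) Vx hm
      ?_ ?_ ?_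
    · intro w m hmw
      by_cases hwz : w = z
      · subst hwz
        rw [hPsame w m hmw, hPsame (y + w) _ (hVgr y w u hu m hmw)]
      · rw [hPne z w m hmw hwz, lie_zero, hPne (y + z) (y + w) _ (hVgr y w u hu m hmw)
          (fun hc => hwz (add_left_cancel hc))]
    · simp
    · intro m1 m2 h1 h2
      rw [lie_add, map_add, map_add, lie_add, h1, h2]
  -- choose the inner elements v_x
  have hv : ∀ x : A, ∃ vv : V, vv ∈ Vx x ∧ (x ≠ 0 → ∀ u ∈ Lx 0, P x (d u) = ⁅u, vv⁆) ∧
      (vv ≠ 0 → ∃ u ∈ Lx 0, P x (d u) ≠ 0) := by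
    intro x
    by_cases h0 : ∀ u ∈ Lx 0, P x (d u) = 0
    · exact ⟨0, zero_mem _, fun _ u hu => by rw [h0 u hu, lie_zero],
        fun h => absurd rfl h⟩
    · push_neg at h0
      by_cases hx : x = 0
      · exact ⟨0, zero_mem _, fun hx' => absurd hx hx', fun _ => h0⟩
      · have hder : ∀ u w : L, u ∈ Lx 0 → w ∈ Lx 0 →
            (P x ∘ₗ d) ⁅u, w⁆ = ⁅u, (P x ∘ₗ d) w⁆ - ⁅w, (P x ∘ₗ d) u⁆ := by
          intro u w hu hw
          have e1 := hequiv 0 u hu x (d w); rw [zero_add] at e1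
          have e2 := hequiv 0 w hw x (d u); rw [zero_add] at e2
          simp only [LinearMap.comp_apply]
          rw [hd u w, map_sub, e1, e2]
        obtain ⟨vv, hvv, hvv2⟩ := ha x hx (P x ∘ₗ d) (fun u _ => hPmem x (d u)) hder
        exact ⟨vv, hvv, fun _ u hu => hvv2 u hu, fun _ => h0⟩
  choose v_ hv1 hv2 hv3 using hv
  -- extend to all homogeneous components using (b)
  have hstar : ∀ x : A, x ≠ 0 → ∀ (y : A) (u : L), u ∈ Lx y →
      P (y + x) (d u) = ⁅u, v_ x⁆ := by
    intro x hx y u hu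
    set f : L →ₗ[F] V := P (y + x) ∘ₗ d - brkMap (F := F) (v_ x) with hfdef
    have hyne : y ≠ y + x := fun h => hx (left_eq_add.mp h)
    have c1 : ∀ w ∈ Lx y, f w ∈ Vx (y + x) := by
      intro w hw
      simp only [hfdef, LinearMap.sub_apply, LinearMap.comp_apply, brkMap_apply]
      exact sub_mem (hPmem _ _) (hVgr y x w hw _ (hv1 x))
    have c2 : ∀ p ∈ Lx 0, ∀ w ∈ Lx y, f ⁅p, w⁆ = ⁅p, f w⁆ := by
      intro p hp w hw
      have e1 := hequiv 0 p hp (y + x) (d w); rw [zero_add] at e1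
      have e2 := hequiv y w hw x (d p)
      have e3 := hv2 x hx p hp
      simp only [hfdef, LinearMap.sub_apply, LinearMap.comp_apply, brkMap_apply]
      rw [hd p w, map_sub, e1, e2, e3, lie_lie, lie_sub]
      abel
    have hf0 := hb y (y + x) hyne f c1 c2 u hu
    simp only [hfdef, LinearMap.sub_apply, LinearMap.comp_apply, brkMap_apply] at hf0
    exact sub_eq_zero.mp hf0
  -- finiteness of the support of v_
  have hSfin : (Function.support v_).Finite := by
    set n := Module.finrank F (Lx 0)
    set b := Module.finBasis F (Lx 0)
    have hsub : Function.support v_ ⊆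
        ⋃ i : Fin n, ((DirectSum.decompose Vx (d (b i))).support : Set A) := by
      intro x hxS
      obtain ⟨u, hu, hne⟩ := hv3 x hxS
      by_contra hnotin
      simp only [Set.mem_iUnion, Finset.mem_coe, DFinsupp.mem_support_iff, not_exists,
        not_not] at hnotin
      have hz : (P x ∘ₗ d ∘ₗ (Lx 0).subtype) = 0 := by
        apply b.ext; intro i
        simp only [LinearMap.comp_apply, LinearMap.zero_apply, Submodule.coe_subtype]
        rw [hPapply, hnotin i]; rfl
      have := congrArg (fun g : (Lx 0) →ₗ[F] V => g ⟨u, hu⟩) hz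
      simp only [LinearMap.comp_apply, LinearMap.zero_apply, Submodule.coe_subtype] at this
      exact hne this
    exact Set.Finite.subset
      (Set.finite_iUnion fun i => (DirectSum.decompose Vx (d (b i))).support.finite_toSet) hsub
  set v : V := ∑ x ∈ hSfin.toFinset, v_ x with hvdef
  have hPv : ∀ x : A, x ≠ 0 → P x v = v_ x := by
    intro x hx
    rw [hvdef, map_sum]
    by_cases hxS : x ∈ hSfin.toFinset
    · rw [Finset.sum_eq_single x (fun z _ hzx => hPne x z (v_ z) (hv1 z) hzx)
        (fun h => absurd hxS h)]
      exact hPsame x _ (hv1 x)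
    · have hv0 : v_ x = 0 := by
        by_contra h; exact hxS (hSfin.mem_toFinset.mpr h)
      rw [hv0]
      apply Finset.sum_eq_zero
      intro z hz
      have hzx : z ≠ x := by
        intro h; subst h
        exact (hSfin.mem_toFinset.mp hz) hv0
      exact hPne x z (v_ z) (hv1 z) hzx
  refine ⟨d - brkMap (F := F) v, v, ?_, ?_, ?_⟩
  · intro y u hu
    apply hmem y
    intro z hz
    have hx : z - y ≠ 0 := sub_ne_zero.mpr hz
    have hzy : z = y + (z - y) := by abel
    rw [LinearMap.sub_apply, map_sub, brkMap_apply, hzy, hstar (z - y) hx y u hu,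
      hequiv y u hu (z - y) v, hPv _ hx, sub_self]
  · intro u w
    simp only [LinearMap.sub_apply, brkMap_apply]
    rw [hd u w, lie_lie, lie_sub, lie_sub]
    abel
  · intro u
    simp only [LinearMap.sub_apply, brkMap_apply]
    abel
end

section
/- Let W be the generalized Witt algebra and c ∈ W⊗W⊗W an element satisfying a·c = 0 for all a ∈ W (adjoint diagonal action on the triple tensor product). Then c = 0. In other words, the space of W-invariants of W⊗W⊗W is trivial. -/
/-!
Expand `c ∈ M ⊗ W` along the basis `t^x ∂_i` of the last factor, with coefficients
`c_{x,i} ∈ M`. Acting by `t^a ∂` shifts the degree `x` of that factor to `a + x`; for all but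
finitely many `a` the coefficient of `⁅t^a ∂_i, c⁆` at `(a + x, i)` therefore sees only the action
on the last factor, and it equals `x_i c_{x,i} - ∑_j a_j c_{x,j}`. So `a ↦ ∑_j a_j c_{x,j}` is
additive on `A` and constant off a finite set, hence zero on the infinite group `A`; as `A` spans
`F^n`, all `c_{x,i}` vanish. The theorem is the case `M = W ⊗ W`.
-/

open TensorProduct Filter

theorem AddMonoidHom.eq_zero_of_eventually_eq_const {G M : Type*} [AddGroup G] [Infinite G]
    [AddGroup M] (f : G →+ M) {m : M} (h : ∀ᶠ a in cofinite, f a = m) : f = 0 := by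
  ext b
  obtain ⟨a, hfa, hfba⟩ := (h.and ((add_right_injective b).tendsto_cofinite.eventually h)).exists
  rw [map_add, hfa] at hfba
  simpa using hfba

theorem Finsupp.eventually_cofinite_forall_apply_eq_zero {α β M : Type*} [Zero M]
    (g : α × β →₀ M) : ∀ᶠ a in cofinite, ∀ b, g (a, b) = 0 := by
  refine (g.hasFiniteSupport.image Prod.fst).subset fun a ha => ?_
  obtain ⟨b, hb⟩ := not_forall.mp ha
  exact ⟨(a, b), hb, rfl⟩

theorem AddSubgroup.infinite_of_span_eq_top {F V : Type*} [Field F] [CharZero F]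
    [AddCommGroup V] [Module F V] [Nontrivial V] {A : AddSubgroup V}
    (hA : Submodule.span F (A : Set V) = ⊤) : Infinite A := by
  obtain ⟨a, ha, ha0⟩ : ∃ a ∈ A, a ≠ 0 := by
    by_contra! h
    exact bot_ne_top ((Submodule.span_eq_bot.mpr h).symm.trans hA)
  refine Infinite.of_injective (fun k : ℕ => k • (⟨a, ha⟩ : A)) fun k l hkl => ?_
  have : (k : F) • a = (l : F) • a := by
    simpa only [Nat.cast_smul_eq_nsmul, AddSubgroup.coe_nsmul] using congrArg Subtype.val hkl
  exact Nat.cast_injective (smul_left_injective F ha0 this)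

namespace WittAlgebra

variable {F : Type*} [Field F] {n : ℕ} {A : AddSubgroup (Fin n → F)}
  {L : Type*} [LieRing L] [LieAlgebra F L]
  {t : A → (Fin n → F) →ₗ[F] L} {ℬ : Module.Basis (A × Fin n) F L}

theorem apply_eq_sum_basis (hℬ : ∀ (x : A) (i : Fin n), ℬ (x, i) = t x (Pi.single i 1))
    (x : A) (d : Fin n → F) : t x d = ∑ m, d m • ℬ (x, m) := by
  simp only [hℬ, ← map_smul, ← map_sum]
  congr 1
  ext j
  simp [Finset.sum_apply, Pi.single_apply]

theorem basis_repr_apply [DecidableEq A]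
    (hℬ : ∀ (x : A) (i : Fin n), ℬ (x, i) = t x (Pi.single i 1))
    (x y : A) (d : Fin n → F) (i : Fin n) :
    ℬ.repr (t x d) (y, i) = if x = y then d i else 0 := by
  rw [apply_eq_sum_basis hℬ]
  by_cases h : x = y <;> simp [Finsupp.single_apply, h]

theorem basis_repr_lie_basis [DecidableEq A]
    (hℬ : ∀ (x : A) (i : Fin n), ℬ (x, i) = t x (Pi.single i 1))
    (hbr : ∀ (x y : A) (d d' : Fin n → F),
      ⁅t x d, t y d'⁆ = t (x + y)
        ((∑ i, d i * (y : Fin n → F) i) • d' - (∑ i, d' i * (x : Fin n → F) i) • d))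
    (a x y : A) (d : Fin n → F) (i j : Fin n) :
    ℬ.repr ⁅t a d, ℬ (y, j)⁆ (a + x, i) =
      if y = x then
        (∑ m, d m * (x : Fin n → F) m) * (Pi.single j 1 : Fin n → F) i - (a : Fin n → F) j * d i
      else 0 := by
  rw [hℬ, hbr, basis_repr_apply hℬ]
  by_cases h : y = x
  · subst h
    simp [Pi.single_apply]
  · simp [h]

variable {M : Type*} [AddCommGroup M] [Module F M] [LieRingModule L M] [LieModule F L M]

theorem equivFinsuppOfBasisRight_lie_apply [DecidableEq A]
    (hℬ : ∀ (x : A) (i : Fin n), ℬ (x, i) = t x (Pi.single i 1))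
    (hbr : ∀ (x y : A) (d d' : Fin n → F),
      ⁅t x d, t y d'⁆ = t (x + y)
        ((∑ i, d i * (y : Fin n → F) i) • d' - (∑ i, d' i * (x : Fin n → F) i) • d))
    (a x : A) (d : Fin n → F) (c : M ⊗[F] L) (i : Fin n) :
    equivFinsuppOfBasisRight ℬ ⁅t a d, c⁆ (a + x, i) =
      ⁅t a d, equivFinsuppOfBasisRight ℬ c (a + x, i)⁆
        + (∑ m, d m * (x : Fin n → F) m) • equivFinsuppOfBasisRight ℬ c (x, i)
        - d i • ∑ j, (a : Fin n → F) j • equivFinsuppOfBasisRight ℬ c (x, j) := by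
  obtain ⟨g, rfl⟩ := (equivFinsuppOfBasisRight ℬ).symm.surjective c
  simp only [LinearEquiv.apply_symm_apply]
  induction g using Finsupp.induction_linear with
  | zero => simp
  | add g g' hg hg' =>
    simp only [map_add, lie_add, Finsupp.add_apply, hg, hg', smul_add, Finset.sum_add_distrib]
    abel
  | single p m =>
    obtain ⟨y, j⟩ := p
    rw [equivFinsuppOfBasisRight_symm_apply, Finsupp.sum_single_index (by simp),
      LieModule.lie_tmul_right, map_add, Finsupp.add_apply,
      equivFinsuppOfBasisRight_apply_tmul_apply, equivFinsuppOfBasisRight_apply_tmul_apply,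
      basis_repr_lie_basis hℬ hbr, add_sub_assoc]
    congr 1
    · rw [ℬ.repr_self, Finsupp.single_apply, Finsupp.single_apply]
      split_ifs <;> simp
    · by_cases h : y = x
      · subst h
        simp [Finsupp.single_apply, Pi.single_apply, sub_smul, mul_smul, smul_comm (d i), eq_comm]
      · simp [h]

theorem eq_zero_of_forall_lie_eq_zero [CharZero F]
    (hA : Submodule.span F (A : Set (Fin n → F)) = ⊤)
    (hℬ : ∀ (x : A) (i : Fin n), ℬ (x, i) = t x (Pi.single i 1))
    (hbr : ∀ (x y : A) (d d' : Fin n → F),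
      ⁅t x d, t y d'⁆ = t (x + y)
        ((∑ i, d i * (y : Fin n → F) i) • d' - (∑ i, d' i * (x : Fin n → F) i) • d))
    (c : M ⊗[F] L) (hc : ∀ a : L, ⁅a, c⁆ = 0) : c = 0 := by
  classical
  set g := equivFinsuppOfBasisRight ℬ c
  suffices g = 0 from (equivFinsuppOfBasisRight ℬ).map_eq_zero_iff.mp this
  ext ⟨x, i⟩
  have : Nonempty (Fin n) := ⟨i⟩
  have : Infinite A := AddSubgroup.infinite_of_span_eq_top hA
  let φ := Fintype.linearCombination F fun j => g (x, j)
  have hgeneric : ∀ᶠ a : A in cofinite, φ a = (x : Fin n → F) i • g (x, i) := by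
    filter_upwards [(add_left_injective x).tendsto_cofinite.eventually
      g.eventually_cofinite_forall_apply_eq_zero] with a ha
    have h := equivFinsuppOfBasisRight_lie_apply hℬ hbr a x (Pi.single i 1) c i
    rw [hc, ha] at h
    simp only [lie_zero, zero_add, Pi.single_eq_same, one_smul, Pi.single_apply, ite_mul,
      one_mul, zero_mul, Finset.sum_ite_eq', Finset.mem_univ, if_true] at h
    simpa [φ, Fintype.linearCombination_apply] using (sub_eq_zero.mp h.symm).symm
  have hφA : ∀ a : A, φ a = 0 := fun a =>
    DFunLike.congr_fun ((φ.toAddMonoidHom.comp A.subtype).eq_zero_of_eventually_eq_const hgeneric) a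
  have hφ : φ = 0 := LinearMap.ext_on hA fun v hv => hφA ⟨v, hv⟩
  simpa [φ] using LinearMap.congr_fun hφ (Pi.single i 1)

end WittAlgebra

/-- For the generalized Witt algebra `W`, if `c ∈ W ⊗ W ⊗ W` satisfies
`a · c = 0` for all `a ∈ W` (adjoint diagonal action), then `c = 0`: the space of
`W`-invariants in `W ⊗ W ⊗ W` is trivial. -/
theorem witt_bialg_stmt12 {F : Type*} [Field F] [CharZero F] {n : ℕ}
    {A : AddSubgroup (Fin n → F)}
    (hA : Submodule.span F (A : Set (Fin n → F)) = ⊤)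
    {L : Type*} [LieRing L] [LieAlgebra F L]
    (t : A → (Fin n → F) →ₗ[F] L)
    (ℬ : Module.Basis (A × Fin n) F L)
    (hℬ : ∀ (x : A) (i : Fin n), ℬ (x, i) = t x (Pi.single i 1))
    (hbr : ∀ (x y : A) (d d' : Fin n → F),
      ⁅t x d, t y d'⁆ = t (x + y)
        ((∑ i, d i * (y : Fin n → F) i) • d' - (∑ i, d' i * (x : Fin n → F) i) • d))
    (c : L ⊗[F] L ⊗[F] L) (hc : ∀ a : L, ⁅a, c⁆ = 0) :
    c = 0 :=
  WittAlgebra.eq_zero_of_forall_lie_eq_zero hA hℬ hbr c hc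
end
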